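/- arXiv:0908.3615 — 8 statements merged into one kernel-verified Lean document; each statement's English description precedes it below -/
import Mathlib

section
/- For every real number t > 1, F(t·log(t)/(t-1)) - F(log(t)/(t-1)) < log(t)/√(2πe), where F denotes the cumulative distribution function of the chi-square distribution with one degree of freedom. -/
open Real Set

/-- Standard normal cumulative distribution function. -/
noncomputable def stdNormalCDF (x : ℝ) : ℝ :=
  ∫ u in Iic x, Real.exp (-u ^ 2 / 2) / Real.sqrt (2 * Real.pi)

/-- C.d.f. of the chi-square distribution with one degree of freedom. -/
noncomputable def chiSqOneCDF (x : ℝ) : ℝ := 2 * stdNormalCDF (Real.sqrt x) - 1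

theorem chiSqOneCDF_diff_lt (t : ℝ) (ht : 1 < t) :
    chiSqOneCDF (t * Real.log t / (t - 1)) - chiSqOneCDF (Real.log t / (t - 1))
      < Real.log t / Real.sqrt (2 * Real.pi * Real.exp 1) := by
  have ht0 : (0:ℝ) < t := by linarith
  have ht1 : (0:ℝ) < t - 1 := by linarith
  have hlogpos : 0 < Real.log t := Real.log_pos ht
  set a : ℝ := Real.log t / (t - 1) with ha_def
  have ha0 : 0 < a := div_pos hlogpos ht1
  have halt : a < 1 := by
    rw [ha_def, div_lt_one ht1]
    exact Real.log_lt_sub_one_of_pos ht0 (by linarith)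
  have hta1 : 1 < t * a := by
    have h := Real.log_lt_sub_one_of_pos (x := t⁻¹) (by positivity) (by
      intro h; rw [inv_eq_one] at h; linarith)
    rw [Real.log_inv] at h
    -- -log t < 1/t - 1, so log t > 1 - 1/t, so t*log t > t - 1
    have : t - 1 < t * Real.log t := by
      have h2 : 1 - t⁻¹ < Real.log t := by linarith
      have := mul_lt_mul_of_pos_left h2 ht0
      rwa [mul_sub, mul_inv_cancel₀ ht0.ne', mul_one] at this
    rw [ha_def, mul_div_assoc' t _ _, lt_div_iff₀ ht1, one_mul]
    linarith
  set c : ℝ := Real.sqrt a with hc_def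
  set d : ℝ := Real.sqrt (t * a) with hd_def
  have hc0 : 0 < c := Real.sqrt_pos.2 ha0
  have hcd : c < d := by
    apply Real.sqrt_lt_sqrt ha0.le
    nlinarith
  have hc1 : c < 1 := by
    rw [hc_def, show (1:ℝ) = Real.sqrt 1 by simp]
    exact Real.sqrt_lt_sqrt ha0.le halt
  have hsqrt2pi : 0 < Real.sqrt (2 * Real.pi) := Real.sqrt_pos.2 (by positivity)
  -- integrability of the gaussian density
  have hint : MeasureTheory.Integrable (fun u : ℝ => Real.exp (-u ^ 2 / 2) / Real.sqrt (2 * Real.pi)) := by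
    have h := (integrable_exp_neg_mul_sq (b := 1/2) (by norm_num)).div_const (Real.sqrt (2 * Real.pi))
    convert h using 2 with u
    ring_nf
  -- difference of CDFs as interval integral
  have hdiff : stdNormalCDF d - stdNormalCDF c
      = ∫ u in c..d, Real.exp (-u ^ 2 / 2) / Real.sqrt (2 * Real.pi) := by
    rw [stdNormalCDF, stdNormalCDF]
    exact intervalIntegral.integral_Iic_sub_Iic hint.integrableOn hint.integrableOn
  -- pointwise bound: for x > 0, exp(-x^2/2) ≤ exp(-1/2)/x, strict unless x = 1
  have key : ∀ x : ℝ, 0 < x → x ≠ 1 →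
      Real.exp (-x ^ 2 / 2) / Real.sqrt (2 * Real.pi)
        < Real.exp (-(1:ℝ)/2) / Real.sqrt (2 * Real.pi) * x⁻¹ := by
    intro x hx hx1
    have hxe : x * Real.exp (-x ^ 2 / 2) < Real.exp (-(1:ℝ)/2) := by
      have hlog : Real.log (x ^ 2) < x ^ 2 - 1 :=
        Real.log_lt_sub_one_of_pos (by positivity) (by
          intro h
          have hx0 : (x - 1) * (x + 1) = 0 := by nlinarith
          rcases mul_eq_zero.1 hx0 with h' | h'
          · exact hx1 (by linarith)
          · linarith)
      have hx' : Real.log x < (x ^ 2 - 1) / 2 := by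
        rw [Real.log_pow] at hlog; push_cast at hlog; linarith
      calc x * Real.exp (-x ^ 2 / 2) = Real.exp (Real.log x + -x ^ 2 / 2) := by
            rw [Real.exp_add, Real.exp_log hx]
        _ < Real.exp (-(1:ℝ)/2) := by
            apply Real.exp_lt_exp.2; linarith
    have h2 : Real.exp (-x ^ 2 / 2) < Real.exp (-(1:ℝ)/2) * x⁻¹ := by
      rw [← div_eq_mul_inv, lt_div_iff₀ hx]
      nlinarith
    rw [show Real.exp (-(1:ℝ)/2) / Real.sqrt (2 * Real.pi) * x⁻¹
        = Real.exp (-(1:ℝ)/2) * x⁻¹ / Real.sqrt (2 * Real.pi) by ring]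
    gcongr
  have keyle : ∀ x : ℝ, 0 < x →
      Real.exp (-x ^ 2 / 2) / Real.sqrt (2 * Real.pi)
        ≤ Real.exp (-(1:ℝ)/2) / Real.sqrt (2 * Real.pi) * x⁻¹ := by
    intro x hx
    rcases eq_or_ne x 1 with rfl | hx1
    · norm_num
    · exact (key x hx hx1).le
  -- strict integral inequality
  have hmain : (∫ u in c..d, Real.exp (-u ^ 2 / 2) / Real.sqrt (2 * Real.pi))
      < ∫ u in c..d, Real.exp (-(1:ℝ)/2) / Real.sqrt (2 * Real.pi) * u⁻¹ := by
    apply intervalIntegral.integral_lt_integral_of_continuousOn_of_le_of_exists_lt hcd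
    · exact (Continuous.continuousOn (by continuity))
    · apply ContinuousOn.mul continuousOn_const
      exact ContinuousOn.inv₀ continuousOn_id fun x hx => by
        have : c ≤ x := hx.1
        exact (lt_of_lt_of_le hc0 this).ne'
    · intro x hx
      exact keyle x (lt_trans hc0 hx.1)
    · exact ⟨c, ⟨le_refl c, hcd.le⟩, key c hc0 hc1.ne⟩
  -- compute the RHS integral
  have hrhs : (∫ u in c..d, Real.exp (-(1:ℝ)/2) / Real.sqrt (2 * Real.pi) * u⁻¹)
      = Real.exp (-(1:ℝ)/2) / Real.sqrt (2 * Real.pi) * (Real.log t / 2) := by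
    rw [intervalIntegral.integral_const_mul, integral_inv_of_pos hc0 (lt_trans hc0 hcd)]
    congr 1
    rw [hd_def, hc_def, Real.sqrt_mul ht0.le,
      mul_div_assoc, div_self (Real.sqrt_pos.2 ha0).ne', mul_one, Real.log_sqrt ht0.le]
  -- conclude
  have hearg : t * Real.log t / (t - 1) = t * a := by rw [ha_def]; ring
  have hsqrtE : Real.sqrt (2 * Real.pi * Real.exp 1)
      = Real.sqrt (2 * Real.pi) * Real.exp (1/2) := by
    rw [Real.sqrt_mul (by positivity), ← Real.exp_half]
  have hfinal : 2 * (Real.exp (-(1:ℝ)/2) / Real.sqrt (2 * Real.pi) * (Real.log t / 2))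
      = Real.log t / Real.sqrt (2 * Real.pi * Real.exp 1) := by
    have hE : Real.exp (-(1:ℝ)/2) = (Real.exp ((1:ℝ)/2))⁻¹ := by
      rw [← Real.exp_neg]; norm_num
    rw [hsqrtE, hE]
    field_simp
  rw [chiSqOneCDF, chiSqOneCDF, hearg, ← hd_def, ← hc_def,
    show 2 * stdNormalCDF d - 1 - (2 * stdNormalCDF c - 1)
      = 2 * (stdNormalCDF d - stdNormalCDF c) by ring,
    hdiff, ← hfinal]
  have := hmain
  rw [hrhs] at this
  linarith
end

section
/- For every real number t > 0, 1 - F(t) ≤ √(2/π) · exp(-(t + log t)/2), where F denotes the c.d.f. of the chi-square distribution with one degree of freedom. -/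
/-!
Since `1 - F(t) = 2 (1 - Φ(√t))`, the claim is the Mills-ratio bound `1 - Φ(x) ≤ φ(x) / x` at
`x = √t`. On `(x, ∞)` we have `1 ≤ u / x`, so the Gaussian tail is dominated by
`x⁻¹ ∫_x^∞ u e^{-u²/2} du = e^{-x²/2} / x`, an integral with an explicit antiderivative.
-/

open Real Set

open MeasureTheory Filter

section GaussianTail

variable {b : ℝ}

theorem hasDerivAt_neg_exp_neg_mul_sq_div (hb : b ≠ 0) (u : ℝ) :
    HasDerivAt (fun u : ℝ => -exp (-b * u ^ 2) / (2 * b)) (u * exp (-b * u ^ 2)) u := by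
  have h : HasDerivAt (fun u => -b * u ^ 2) (-b * (2 * u)) u := by
    simpa using (hasDerivAt_pow 2 u).const_mul (-b)
  refine (h.exp.fun_neg.div_const (2 * b)).congr_deriv ?_
  field_simp

theorem integral_Ioi_mul_exp_neg_mul_sq (hb : 0 < b) (x : ℝ) :
    ∫ u in Ioi x, u * exp (-b * u ^ 2) = exp (-b * x ^ 2) / (2 * b) := by
  have hlim : Tendsto (fun u : ℝ => -exp (-b * u ^ 2) / (2 * b)) atTop (nhds 0) := by
    have : Tendsto (fun u : ℝ => -b * u ^ 2) atTop atBot :=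
      (tendsto_pow_atTop two_ne_zero).const_mul_atTop_of_neg (neg_neg_of_pos hb)
    simpa using ((tendsto_exp_atBot.comp this).neg).div_const (2 * b)
  rw [integral_Ioi_of_hasDerivAt_of_tendsto (by fun_prop)
    (fun u _ => hasDerivAt_neg_exp_neg_mul_sq_div hb.ne' u)
    (integrable_mul_exp_neg_mul_sq hb).integrableOn hlim]
  ring

theorem integral_Ioi_exp_neg_mul_sq_le (hb : 0 < b) {x : ℝ} (hx : 0 < x) :
    ∫ u in Ioi x, exp (-b * u ^ 2) ≤ exp (-b * x ^ 2) / (2 * b * x) := by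
  calc ∫ u in Ioi x, exp (-b * u ^ 2)
      ≤ ∫ u in Ioi x, x⁻¹ * (u * exp (-b * u ^ 2)) := by
        refine setIntegral_mono_on (integrable_exp_neg_mul_sq hb).integrableOn
          ((integrable_mul_exp_neg_mul_sq hb).integrableOn.const_mul _) measurableSet_Ioi
          fun u (hu : x < u) => ?_
        rw [← mul_assoc]
        exact le_mul_of_one_le_left (exp_nonneg _)
          ((one_le_inv_mul₀ hx).mpr hu.le)
    _ = exp (-b * x ^ 2) / (2 * b * x) := by
        rw [integral_const_mul, integral_Ioi_mul_exp_neg_mul_sq hb]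
        field_simp

end GaussianTail

theorem one_sub_stdNormalCDF (x : ℝ) :
    1 - stdNormalCDF x = (∫ u in Ioi x, exp (-(1 / 2) * u ^ 2)) / √(2 * π) := by
  have hkernel : (fun u : ℝ => exp (-u ^ 2 / 2)) = fun u => exp (-(1 / 2) * u ^ 2) := by
    ext u; ring_nf
  have hint := integrable_exp_neg_mul_sq one_half_pos
  have htotal : ∫ u, exp (-(1 / 2) * u ^ 2) = √(2 * π) := by
    rw [integral_gaussian]; congr 1; ring
  have hsplit := intervalIntegral.integral_Iic_add_Ioi (b := x) hint.integrableOn hint.integrableOn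
  rw [htotal] at hsplit
  have hpos : 0 < √(2 * π) := by positivity
  rw [stdNormalCDF, integral_div, hkernel, eq_div_iff hpos.ne', sub_mul, one_mul,
    div_mul_cancel₀ _ hpos.ne']
  linarith

theorem one_sub_stdNormalCDF_le {x : ℝ} (hx : 0 < x) :
    1 - stdNormalCDF x ≤ exp (-x ^ 2 / 2) / (x * √(2 * π)) := by
  rw [one_sub_stdNormalCDF]
  calc (∫ u in Ioi x, exp (-(1 / 2) * u ^ 2)) / √(2 * π)
      ≤ exp (-(1 / 2) * x ^ 2) / (2 * (1 / 2) * x) / √(2 * π) := by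
        gcongr
        exact integral_Ioi_exp_neg_mul_sq_le one_half_pos hx
    _ = exp (-x ^ 2 / 2) / (x * √(2 * π)) := by
        rw [div_div]; ring_nf

theorem exp_neg_add_log_div_two {t : ℝ} (ht : 0 < t) :
    exp (-(t + log t) / 2) = exp (-t / 2) / √t := by
  rw [sqrt_eq_rpow, rpow_def_of_pos ht, ← exp_sub]
  ring_nf

theorem sqrt_two_div_pi : √(2 / π) = 2 / √(2 * π) := by
  rw [eq_div_iff (by positivity), ← sqrt_mul (by positivity),
    show 2 / π * (2 * π) = 2 ^ 2 by field_simp, sqrt_sq zero_le_two]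

theorem chiSqOneCDF_tail_bound (t : ℝ) (ht : 0 < t) :
    1 - chiSqOneCDF t ≤ Real.sqrt (2 / Real.pi) * Real.exp (-(t + Real.log t) / 2) := by
  have hx : 0 < √t := sqrt_pos.mpr ht
  calc 1 - chiSqOneCDF t = 2 * (1 - stdNormalCDF √t) := by rw [chiSqOneCDF]; ring
    _ ≤ 2 * (exp (-√t ^ 2 / 2) / (√t * √(2 * π))) := by
        gcongr; exact one_sub_stdNormalCDF_le hx
    _ = √(2 / π) * exp (-(t + log t) / 2) := by
        rw [sq_sqrt ht.le, exp_neg_add_log_div_two ht, sqrt_two_div_pi]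
        field_simp
end

section
/- For all real s with 0 < s < 1 and all real t ≥ 0, t - s·log((e^t + s - 1)/s) ≥ (1 - s)·t²/(t + 1 + s). -/
/-!
Both sides vanish at `t = 0`, so it suffices to compare derivatives on `[0, ∞)`. After
factoring out `1 - s`, the derivative comparison
`t (t + 2 + 2s) / (t + 1 + s)² ≤ (eᵗ - 1) / (eᵗ + s - 1)` reduces, by cross-multiplying,
to `s t (t + 2 + 2s) ≤ (1 + s)² (eᵗ - 1)`, which follows from `eᵗ ≥ 1 + t + t²/2`.
-/

open Real Set

lemma mul_mul_add_le_sq_mul_exp_sub_one {s x : ℝ} (hs0 : 0 ≤ s) (hs1 : s ≤ 1) (hx : 0 ≤ x) :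
    s * x * (x + 2 + 2 * s) ≤ (1 + s) ^ 2 * (exp x - 1) := by
  have hexp := quadratic_le_exp_of_nonneg hx
  calc s * x * (x + 2 + 2 * s)
      ≤ (1 + s) ^ 2 * (x + x ^ 2 / 2) := by
        -- the difference is `(1 - s) (1 + s) x + (1 + s²) x² / 2`
        nlinarith [mul_nonneg (mul_nonneg hx (sub_nonneg.2 hs1)) (by linarith : 0 ≤ 1 + s),
          mul_nonneg (sq_nonneg x) (sq_nonneg s)]
    _ ≤ (1 + s) ^ 2 * (exp x - 1) := by gcongr; linarith

lemma exp_add_sub_one_pos {s x : ℝ} (hs : 0 < s) (hx : 0 ≤ x) : 0 < exp x + s - 1 := by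
  linarith [one_le_exp hx]

lemma div_add_sq_le_exp_sub_one_div {s x : ℝ} (hs0 : 0 < s) (hs1 : s ≤ 1) (hx : 0 ≤ x) :
    x * (x + 2 + 2 * s) / (x + 1 + s) ^ 2 ≤ (exp x - 1) / (exp x + s - 1) := by
  have hE := exp_add_sub_one_pos hs0 hx
  rw [div_le_div_iff₀ (by positivity) hE]
  -- `x (x + 2 + 2s) = (x + 1 + s)² - (1 + s)²`
  nlinarith [mul_mul_add_le_sq_mul_exp_sub_one hs0.le hs1 hx]

lemma hasDerivAt_sub_mul_log_exp_add_sub_one_div {s x : ℝ} (hs : 0 < s) (hx : 0 ≤ x) :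
    HasDerivAt (fun y => y - s * log ((exp y + s - 1) / s))
      ((1 - s) * ((exp x - 1) / (exp x + s - 1))) x := by
  have hE := exp_add_sub_one_pos hs hx
  have hlog := ((((hasDerivAt_exp x).add_const s).sub_const 1).div_const s).log
    (div_ne_zero hE.ne' hs.ne')
  refine ((hasDerivAt_id' x).sub (hlog.const_mul s)).congr_deriv ?_
  field_simp
  ring

lemma hasDerivAt_mul_sq_div_add {c s x : ℝ} (hx : x + 1 + s ≠ 0) :
    HasDerivAt (fun y => c * y ^ 2 / (y + 1 + s))
      (c * (x * (x + 2 + 2 * s) / (x + 1 + s) ^ 2)) x := by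
  refine (((hasDerivAt_pow 2 x).const_mul c).div
    (((hasDerivAt_id' x).add_const 1).add_const s) hx).congr_deriv ?_
  field_simp
  ring

theorem stmt2 (s t : ℝ) (hs0 : 0 < s) (hs1 : s < 1) (ht : 0 ≤ t) :
    t - s * Real.log ((Real.exp t + s - 1) / s) ≥ (1 - s) * t ^ 2 / (t + 1 + s) := by
  have hψ : ∀ x ∈ Icc 0 t, HasDerivAt (fun y => (1 - s) * y ^ 2 / (y + 1 + s))
      ((1 - s) * (x * (x + 2 + 2 * s) / (x + 1 + s) ^ 2)) x :=
    fun x hx => hasDerivAt_mul_sq_div_add (by linarith [hx.1])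
  have hφ : ∀ x ∈ Icc 0 t, HasDerivAt (fun y => y - s * log ((exp y + s - 1) / s))
      ((1 - s) * ((exp x - 1) / (exp x + s - 1))) x :=
    fun x hx => hasDerivAt_sub_mul_log_exp_add_sub_one_div hs0 hx.1
  refine image_le_of_deriv_right_le_deriv_boundary
    (fun x hx => (hψ x hx).continuousAt.continuousWithinAt)
    (fun x hx => (hψ x (Ico_subset_Icc_self hx)).hasDerivWithinAt)
    (by simp) (fun x hx => (hφ x hx).continuousAt.continuousWithinAt)
    (fun x hx => (hφ x (Ico_subset_Icc_self hx)).hasDerivWithinAt)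
    (fun x hx => ?_) (right_mem_Icc.2 ht)
  exact mul_le_mul_of_nonneg_left (div_add_sq_le_exp_sub_one_div hs0 hs1.le hx.1) (by linarith)
end

section
/- For all real s and t with 0 < s < 1 and 0 ≤ t < -log(1 - s), we have -t - s·log(e^{-t} + s - 1) ≥ t - s·log(e^t + s - 1). -/
open Real Set

/-!
With `φ(x) = x - s log(eˣ + s - 1)`, the claim is `φ(t) ≤ φ(-t)`. The gap `φ(-x) - φ(x)` vanishes
at `0`, and its derivative, written with `a = eˣ`, is
`s a / (a + s - 1) + s a⁻¹ / (a⁻¹ + s - 1) - 2 = (1 - s)(2 - s)(a - 1)² / (a (a + s - 1) (a⁻¹ + s - 1))`,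
which is nonnegative wherever both logarithms have positive arguments.
-/

noncomputable def phi (s x : ℝ) : ℝ := x - s * log (exp x + s - 1)

lemma exp_add_sub_one_pos_iff {s : ℝ} (hs : s < 1) (x : ℝ) :
    0 < exp x + s - 1 ↔ log (1 - s) < x := by
  rw [log_lt_iff_lt_exp (by linarith)]
  constructor <;> intro <;> linarith

lemma two_le_div_add_inv_div {s a : ℝ} (hs : s ≤ 1) (ha : 0 < a + s - 1)
    (ha' : 0 < a⁻¹ + s - 1) : 2 ≤ s * a / (a + s - 1) + s * a⁻¹ / (a⁻¹ + s - 1) := by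
  have a_pos : 0 < a := by linarith
  have key : s * a / (a + s - 1) + s * a⁻¹ / (a⁻¹ + s - 1) - 2
      = (1 - s) * (2 - s) * (a - 1) ^ 2 / (a * (a + s - 1) * (a⁻¹ + s - 1)) := by
    have h1 : a + s - 1 ≠ 0 := ha.ne'
    have h2 : 1 + s * a - a ≠ 0 := by
      have : 0 < a * (a⁻¹ + s - 1) := mul_pos a_pos ha'
      rw [mul_sub, mul_add, mul_inv_cancel₀ a_pos.ne'] at this
      linarith
    field_simp
    ring
  rw [← sub_nonneg, key]
  have h1s : 0 ≤ 1 - s := by linarith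
  have h2s : 0 ≤ 2 - s := by linarith
  positivity

lemma hasDerivAt_phi {s x : ℝ} (hx : 0 < exp x + s - 1) :
    HasDerivAt (phi s) (1 - s * exp x / (exp x + s - 1)) x := by
  have hlog := (((hasDerivAt_exp x).add_const s).sub_const 1).log hx.ne'
  exact ((hasDerivAt_id x).sub (hlog.const_mul s)).congr_deriv (by ring)

lemma hasDerivAt_phi_neg_sub_phi {s x : ℝ} (hx : 0 < exp x + s - 1)
    (hx' : 0 < exp (-x) + s - 1) :
    HasDerivAt (fun y => phi s (-y) - phi s y)
      (s * exp x / (exp x + s - 1) + s * (exp x)⁻¹ / ((exp x)⁻¹ + s - 1) - 2) x := by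
  have hneg := (hasDerivAt_phi hx').comp x (hasDerivAt_neg x)
  refine (hneg.sub (hasDerivAt_phi hx)).congr_deriv ?_
  rw [exp_neg]
  ring

lemma phi_le_phi_neg {s x : ℝ} (hs : s < 1) (hx0 : 0 ≤ x) (hx : x < -log (1 - s)) :
    phi s x ≤ phi s (-x) := by
  set D := Ioo (log (1 - s)) (-log (1 - s))
  have hD : ∀ y ∈ D, 0 < exp y + s - 1 ∧ 0 < exp (-y) + s - 1 := fun y hy =>
    ⟨(exp_add_sub_one_pos_iff hs y).2 hy.1,
      (exp_add_sub_one_pos_iff hs (-y)).2 (by linarith [hy.2])⟩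
  have hderiv : ∀ y ∈ D, HasDerivAt (fun y => phi s (-y) - phi s y)
      (s * exp y / (exp y + s - 1) + s * (exp y)⁻¹ / ((exp y)⁻¹ + s - 1) - 2) y :=
    fun y hy => hasDerivAt_phi_neg_sub_phi (hD y hy).1 (hD y hy).2
  have hmono : MonotoneOn (fun y => phi s (-y) - phi s y) D := by
    refine monotoneOn_of_hasDerivWithinAt_nonneg (convex_Ioo _ _)
      (fun y hy => (hderiv y hy).continuousAt.continuousWithinAt)
      (fun y hy => (hderiv y (interior_subset hy)).hasDerivWithinAt)
      (fun y hy => ?_)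
    rw [interior_Ioo] at hy
    have hinv := (hD y hy).2
    rw [exp_neg] at hinv
    exact sub_nonneg.2 (two_le_div_add_inv_div hs.le (hD y hy).1 hinv)
  have h0 : (0 : ℝ) ∈ D := ⟨by linarith, by linarith⟩
  have hxD : x ∈ D := ⟨by linarith, hx⟩
  have hgap := hmono h0 hxD hx0
  simp only [neg_zero, sub_self] at hgap
  linarith

theorem stmt3_general (s t : ℝ) (hs1 : s < 1) (ht0 : 0 ≤ t)
    (ht1 : t < -Real.log (1 - s)) :
    -t - s * Real.log (Real.exp (-t) + s - 1) ≥ t - s * Real.log (Real.exp t + s - 1) :=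
  phi_le_phi_neg hs1 ht0 ht1

theorem stmt3 (s t : ℝ) (hs0 : 0 < s) (hs1 : s < 1) (ht0 : 0 ≤ t)
    (ht1 : t < -Real.log (1 - s)) :
    -t - s * Real.log (Real.exp (-t) + s - 1) ≥ t - s * Real.log (Real.exp t + s - 1) :=
  stmt3_general s t hs1 ht0 ht1
end

section
/- The total variation distance between N(a, 1) and N(0, 1) is at most |a|/√(2π). -/
open MeasureTheory ProbabilityTheory Real Set

/-- Total variation distance between two measures on ℝ:
the supremum over measurable sets of the absolute difference of the probabilities. -/
noncomputable def tvDist (P Q : Measure ℝ) : ℝ :=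
  sSup {x | ∃ A : Set ℝ, MeasurableSet A ∧ x = |(P A).toReal - (Q A).toReal|}

theorem stmt7 (a : ℝ) :
    tvDist (gaussianReal a 1) (gaussianReal 0 1) ≤ |a| / Real.sqrt (2 * Real.pi) := by
  have hv : (1 : NNReal) ≠ 0 := one_ne_zero
  set P := gaussianReal a 1 with hP
  set Q := gaussianReal 0 1 with hQ
  set S : Set ℝ := {x | a ^ 2 ≤ 2 * a * x} with hSdef
  have hSm : MeasurableSet S := measurableSet_le measurable_const (by fun_prop)
  -- pointwise density comparison
  have hcmp : ∀ x : ℝ, (x ∈ S → gaussianPDF 0 1 x ≤ gaussianPDF a 1 x) ∧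
      (x ∉ S → gaussianPDF a 1 x ≤ gaussianPDF 0 1 x) := by
    intro x
    have h0 : ∀ μ : ℝ, gaussianPDFReal μ 1 x = (√(2 * π))⁻¹ * rexp (- (x - μ) ^ 2 / 2) := by
      intro μ; simp [gaussianPDFReal]
    constructor
    · intro hx
      refine ENNReal.ofReal_le_ofReal ?_
      rw [h0, h0]
      simp only [hSdef, mem_setOf_eq] at hx
      exact mul_le_mul_of_nonneg_left (Real.exp_le_exp.mpr (by nlinarith)) (by positivity)
    · intro hx
      refine ENNReal.ofReal_le_ofReal ?_
      rw [h0, h0]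
      simp only [hSdef, mem_setOf_eq, not_le] at hx
      exact mul_le_mul_of_nonneg_left (Real.exp_le_exp.mpr (by nlinarith)) (by positivity)
  have happ : ∀ (μ : ℝ) (B : Set ℝ), MeasurableSet B →
      gaussianReal μ 1 B = ∫⁻ x in B, gaussianPDF μ 1 x := by
    intro μ B hB; exact gaussianReal_apply μ hv B
  have key1 : ∀ B : Set ℝ, MeasurableSet B → B ⊆ S → Q B ≤ P B := by
    intro B hB hBS
    rw [hP, hQ, happ a B hB, happ 0 B hB]
    exact setLIntegral_mono (measurable_gaussianPDF a 1) fun x hx => (hcmp x).1 (hBS hx)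
  have key2 : ∀ B : Set ℝ, MeasurableSet B → B ⊆ Sᶜ → P B ≤ Q B := by
    intro B hB hBS
    rw [hP, hQ, happ a B hB, happ 0 B hB]
    exact setLIntegral_mono (measurable_gaussianPDF 0 1) fun x hx => (hcmp x).2 (hBS hx)
  have hfin : ∀ (μ : ℝ) (B : Set ℝ), gaussianReal μ 1 B ≠ ⊤ := fun μ B => measure_ne_top _ _
  -- main claim: P A - Q A ≤ P S - Q S for all measurable A
  have claim2 : ∀ A : Set ℝ, MeasurableSet A →
      (P A).toReal - (Q A).toReal ≤ (P S).toReal - (Q S).toReal := by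
    intro A hA
    have e1 : P (A ∩ S) + P (A \ S) = P A := measure_inter_add_diff A hSm
    have e2 : Q (S ∩ A) + Q (S \ A) = Q S := measure_inter_add_diff S hA
    have e3 : P (S ∩ A) + P (S \ A) = P S := measure_inter_add_diff S hA
    have e4 : Q (A ∩ S) + Q (A \ S) = Q A := measure_inter_add_diff A hSm
    have h1 : P (A \ S) ≤ Q (A \ S) := key2 _ (hA.diff hSm) (diff_subset_compl A S)
    have h2 : Q (S \ A) ≤ P (S \ A) := key1 _ (hSm.diff hA) diff_subset
    have hsum : P A + Q S ≤ P S + Q A := by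
      rw [← e1, ← e2, ← e3, ← e4, inter_comm S A]
      calc P (A ∩ S) + P (A \ S) + (Q (A ∩ S) + Q (S \ A))
          ≤ P (A ∩ S) + Q (A \ S) + (Q (A ∩ S) + P (S \ A)) := by gcongr
        _ = P (A ∩ S) + P (S \ A) + (Q (A ∩ S) + Q (A \ S)) := by ring
    have := ENNReal.toReal_mono (by finiteness) hsum
    rw [ENNReal.toReal_add (hfin _ _) (hfin _ _), ENNReal.toReal_add (hfin _ _) (hfin _ _)] at this
    linarith
  have claim2' : ∀ A : Set ℝ, MeasurableSet A →
      (Q A).toReal - (P A).toReal ≤ (P S).toReal - (Q S).toReal := by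
    intro A hA
    have h := claim2 Aᶜ hA.compl
    have hPc : P A + P Aᶜ = 1 := by rw [measure_add_measure_compl hA, measure_univ]
    have hQc : Q A + Q Aᶜ = 1 := by rw [measure_add_measure_compl hA, measure_univ]
    have hPc' : (P A).toReal + (P Aᶜ).toReal = 1 := by
      rw [← ENNReal.toReal_add (hfin _ _) (hfin _ _), hPc, ENNReal.toReal_one]
    have hQc' : (Q A).toReal + (Q Aᶜ).toReal = 1 := by
      rw [← ENNReal.toReal_add (hfin _ _) (hfin _ _), hQc, ENNReal.toReal_one]
    linarith
  -- claim 3 : P S - Q S ≤ |a|/√(2π)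
  have claim3 : (P S).toReal - (Q S).toReal ≤ |a| / Real.sqrt (2 * π) := by
    have hmap : P = Q.map (· + a) := by
      rw [hP, hQ, gaussianReal_map_add_const a, zero_add]
    have hPS : P S = Q ((· + a) ⁻¹' S) := by
      rw [hmap, Measure.map_apply (measurable_add_const a) hSm]
    set pre : Set ℝ := (· + a) ⁻¹' S with hpre
    have hprem : MeasurableSet pre := hSm.preimage (measurable_add_const a)
    have hsub : S ⊆ pre := by
      intro x hx
      simp only [hSdef, mem_setOf_eq] at hx
      simp only [hpre, mem_preimage, hSdef, mem_setOf_eq]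
      nlinarith
    have hdiff : Q pre = Q (pre \ S) + Q S := by
      rw [← measure_inter_add_diff pre hSm, inter_eq_right.mpr hsub, add_comm]
    have hIcc : pre \ S ⊆ Icc (-(|a| / 2)) (|a| / 2) := by
      intro x hx
      obtain ⟨h1, h2⟩ := hx
      simp only [hpre, mem_preimage, hSdef, mem_setOf_eq] at h1 h2
      push_neg at h2
      rcases eq_or_ne a 0 with rfl | ha
      · simp at h2
      have ha' : 0 < |a| := abs_pos.mpr ha
      have hb : |2 * a * x| ≤ a ^ 2 := by
        rw [abs_le]; constructor <;> nlinarith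
      have : 2 * |a| * |x| ≤ |a| ^ 2 := by
        calc 2 * |a| * |x| = |2 * a * x| := by rw [abs_mul, abs_mul]; simp [abs_of_nonneg]
          _ ≤ a ^ 2 := hb
          _ = |a| ^ 2 := (sq_abs a).symm
      have hxle : |x| ≤ |a| / 2 := by nlinarith
      exact mem_Icc.mpr (abs_le.mp hxle)
    have hbound : Q (pre \ S) ≤ ENNReal.ofReal (|a| / Real.sqrt (2 * π)) := by
      calc Q (pre \ S) ≤ Q (Icc (-(|a| / 2)) (|a| / 2)) := measure_mono hIcc
        _ = ∫⁻ x in Icc (-(|a| / 2)) (|a| / 2), gaussianPDF 0 1 x :=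
            happ 0 _ measurableSet_Icc
        _ ≤ ∫⁻ _ in Icc (-(|a| / 2)) (|a| / 2), ENNReal.ofReal ((√(2 * π))⁻¹) := by
            refine setLIntegral_mono measurable_const fun x _ => ?_
            refine ENNReal.ofReal_le_ofReal ?_
            have : gaussianPDFReal 0 1 x = (√(2 * π))⁻¹ * rexp (- (x - 0) ^ 2 / 2) := by
              simp [gaussianPDFReal]
            rw [this]
            calc (√(2 * π))⁻¹ * rexp (- (x - 0) ^ 2 / 2) ≤ (√(2 * π))⁻¹ * 1 :=
                  mul_le_mul_of_nonneg_left
                    (Real.exp_le_one_iff.mpr (by nlinarith [sq_nonneg (x - 0)])) (by positivity)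
              _ = (√(2 * π))⁻¹ := mul_one _
        _ = ENNReal.ofReal ((√(2 * π))⁻¹) * volume (Icc (-(|a| / 2)) (|a| / 2)) := by
            rw [setLIntegral_const]
        _ = ENNReal.ofReal ((√(2 * π))⁻¹) * ENNReal.ofReal |a| := by
            rw [Real.volume_Icc]
            congr 1
            rw [sub_neg_eq_add]
            ring_nf
        _ = ENNReal.ofReal (|a| / Real.sqrt (2 * π)) := by
            rw [← ENNReal.ofReal_mul (by positivity)]
            congr 1
            field_simp
    have : (P S).toReal - (Q S).toReal ≤ (Q (pre \ S)).toReal := by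
      have h1 : (Q pre).toReal = (Q (pre \ S)).toReal + (Q S).toReal := by
        rw [hdiff, ENNReal.toReal_add (hfin _ _) (hfin _ _)]
      rw [hPS]
      linarith
    refine this.trans ?_
    exact ENNReal.toReal_le_of_le_ofReal (by positivity) hbound
  -- conclude
  refine Real.sSup_le ?_ (by positivity)
  rintro x ⟨A, hA, rfl⟩
  rw [abs_sub_le_iff]
  constructor
  · linarith [claim2 A hA, claim3]
  · linarith [claim2' A hA, claim3]
end

section
/- For s > 1, the total variation distance between N(0, s²) and N(0, 1) equals F(s²·log(s²)/(s² - 1)) - F(log(s²)/(s² - 1)), where F is the c.d.f. of the chi-square distribution with one degree of freedom. -/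
/-! The densities of `N(0, v)` with `v > 1` and of `N(0, 1)` cross exactly where
`x² = c := v log v / (v - 1)`: the standard density is the larger one on `S = [-√c, √c]` and
the smaller one off `S`. For two probability measures ordered in this way on `S` and on `Sᶜ`,
the supremum defining the total variation distance is attained at `S`. The masses of `S` are
`P(χ²₁ ≤ c)` under `N(0, 1)` and `P(χ²₁ ≤ c / v)` under `N(0, v)`. -/

open MeasureTheory ProbabilityTheory Real Set
open scoped NNReal

section TotalVariation

variable {α : Type*} [MeasurableSpace α] {P Q : Measure α} {S A : Set α}

lemma measureReal_inter_le_of_restrict_le [IsFiniteMeasure Q] (h : P.restrict S ≤ Q.restrict S)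
    (hA : MeasurableSet A) : P.real (A ∩ S) ≤ Q.real (A ∩ S) := by
  have h' := Measure.le_iff'.1 h A
  rw [Measure.restrict_apply hA, Measure.restrict_apply hA] at h'
  exact ENNReal.toReal_mono (measure_ne_top _ _) h'

lemma measureReal_sub_le_of_restrict_le [IsFiniteMeasure P] [IsFiniteMeasure Q]
    (hS : MeasurableSet S) (hPQ : P.restrict S ≤ Q.restrict S)
    (hQP : Q.restrict Sᶜ ≤ P.restrict Sᶜ) (hA : MeasurableSet A) :
    P.real A - Q.real A ≤ P.real Sᶜ - Q.real Sᶜ := by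
  have hin := measureReal_inter_le_of_restrict_le hPQ hA
  have hout := measureReal_inter_le_of_restrict_le hQP hA.compl
  have split_A (μ : Measure α) [IsFiniteMeasure μ] :
      μ.real A = μ.real (A ∩ S) + μ.real (A ∩ Sᶜ) :=
    (measureReal_inter_add_sdiff hS).symm
  have split_Sc (μ : Measure α) [IsFiniteMeasure μ] :
      μ.real Sᶜ = μ.real (A ∩ Sᶜ) + μ.real (Aᶜ ∩ Sᶜ) := by
    rw [← measureReal_inter_add_sdiff (s := Sᶜ) hA, sdiff_eq, inter_comm Sᶜ A,
      inter_comm Sᶜ Aᶜ]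
  rw [split_A P, split_A Q, split_Sc P, split_Sc Q]
  linarith

end TotalVariation

lemma tvDist_eq_of_restrict_le {P Q : Measure ℝ} [IsProbabilityMeasure P] [IsProbabilityMeasure Q]
    {S : Set ℝ} (hS : MeasurableSet S) (hPQ : P.restrict S ≤ Q.restrict S)
    (hQP : Q.restrict Sᶜ ≤ P.restrict Sᶜ) :
    tvDist P Q = Q.real S - P.real S := by
  have hcompl : P.real Sᶜ - Q.real Sᶜ = Q.real S - P.real S := by
    simp only [measureReal_compl hS, probReal_univ]
    ring
  have hPQ' : P.restrict Sᶜᶜ ≤ Q.restrict Sᶜᶜ := by rwa [compl_compl]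
  have hbound (A : Set ℝ) (hA : MeasurableSet A) :
      |P.real A - Q.real A| ≤ Q.real S - P.real S := by
    have h₁ := measureReal_sub_le_of_restrict_le hS hPQ hQP hA
    have h₂ := measureReal_sub_le_of_restrict_le hS.compl hQP hPQ' hA
    rw [compl_compl] at h₂
    exact abs_le.2 ⟨by linarith, by linarith⟩
  have hS_le : P.real S ≤ Q.real S := by
    simpa using measureReal_inter_le_of_restrict_le hPQ MeasurableSet.univ
  refine IsGreatest.csSup_eq ⟨⟨S, hS, ?_⟩, ?_⟩
  · rw [abs_sub_comm]
    exact (abs_of_nonneg (sub_nonneg.2 hS_le)).symm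
  · rintro _ ⟨A, hA, rfl⟩
    exact hbound A hA

lemma gaussianReal_restrict_le_of_pdf_le {μ : ℝ} {v w : ℝ≥0} (hv : v ≠ 0) (hw : w ≠ 0)
    {S : Set ℝ} (hS : MeasurableSet S)
    (h : ∀ x ∈ S, gaussianPDFReal μ v x ≤ gaussianPDFReal μ w x) :
    (gaussianReal μ v).restrict S ≤ (gaussianReal μ w).restrict S := by
  rw [gaussianReal_of_var_ne_zero _ hv, gaussianReal_of_var_ne_zero _ hw,
    restrict_withDensity hS, restrict_withDensity hS]
  exact withDensity_mono ((ae_restrict_iff' hS).2 (ae_of_all _ fun x hx ↦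
    ENNReal.ofReal_le_ofReal (h x hx)))

lemma gaussianPDFReal_zero_eq {v : ℝ≥0} (hv : v ≠ 0) (x : ℝ) :
    gaussianPDFReal 0 v x = (√(2 * π))⁻¹ * exp (-(x ^ 2 / v + log v) / 2) := by
  have hv' : (0 : ℝ) < v := by positivity
  have hsqrt : √(v : ℝ) = exp (log v / 2) := by
    rw [Real.sqrt_eq_rpow, Real.rpow_def_of_pos hv']
    ring_nf
  rw [gaussianPDFReal, sub_zero, Real.sqrt_mul (by positivity), hsqrt, mul_inv, ← exp_neg,
    mul_assoc, ← exp_add]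
  ring_nf

lemma gaussianPDFReal_le_gaussianPDFReal_one_iff {v : ℝ≥0} (hv : 1 < v) (x : ℝ) :
    gaussianPDFReal 0 v x ≤ gaussianPDFReal 0 1 x ↔ x ^ 2 ≤ v * log v / (v - 1) := by
  have hv' : (1 : ℝ) < v := hv
  have hdiff : -(x ^ 2) / 2 - -(x ^ 2 / v + log v) / 2
      = (v * log v - x ^ 2 * (v - 1)) / (2 * v) := by
    field_simp
    ring
  rw [gaussianPDFReal_zero_eq (by positivity), gaussianPDFReal_zero_eq one_ne_zero,
    NNReal.coe_one, div_one, log_one, add_zero, mul_le_mul_iff_right₀ (by positivity),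
    exp_le_exp, ← sub_nonneg, hdiff,
    le_div_iff₀ (by linarith), le_div_iff₀ (by positivity)]
  constructor <;> intro h <;> linarith

lemma gaussianReal_zero_one_real_Iic (u : ℝ) :
    (gaussianReal 0 1).real (Iic u) = stdNormalCDF u := by
  rw [measureReal_def, gaussianReal_apply_eq_integral 0 one_ne_zero,
    ENNReal.toReal_ofReal (integral_nonneg fun x ↦ gaussianPDFReal_nonneg _ _ _), stdNormalCDF]
  congr with x
  simp [gaussianPDFReal, div_eq_inv_mul]

lemma gaussianReal_zero_one_real_Iio_neg (u : ℝ) :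
    (gaussianReal 0 1).real (Iio (-u)) = 1 - stdNormalCDF u := by
  have hpre : (fun x : ℝ ↦ -x) ⁻¹' Ioi u = Iio (-u) := by
    ext x
    simp
  rw [← hpre, ← map_measureReal_apply measurable_neg measurableSet_Ioi, gaussianReal_map_neg,
    neg_zero, ← compl_Iic, measureReal_compl measurableSet_Iic, probReal_univ,
    gaussianReal_zero_one_real_Iic]

lemma gaussianReal_zero_one_real_Icc_neg {u : ℝ} (hu : 0 ≤ u) :
    (gaussianReal 0 1).real (Icc (-u) u) = 2 * stdNormalCDF u - 1 := by
  have hIcc : Iic u \ Iio (-u) = Icc (-u) u := by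
    ext x
    simp [and_comm]
  rw [← hIcc, measureReal_sdiff (Iio_subset_Iic_iff.2 (by linarith)) measurableSet_Iio,
    gaussianReal_zero_one_real_Iic, gaussianReal_zero_one_real_Iio_neg]
  ring

lemma gaussianReal_real_Icc_neg {v : ℝ≥0} (hv : v ≠ 0) {t : ℝ} (ht : 0 ≤ t) :
    (gaussianReal 0 v).real (Icc (-t) t) = chiSqOneCDF (t ^ 2 / v) := by
  have hσ : 0 < √(v : ℝ) := Real.sqrt_pos.2 (by positivity)
  have hmap : (gaussianReal 0 1).map (√(v : ℝ) * ·) = gaussianReal 0 v := by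
    rw [gaussianReal_map_const_mul, mul_zero, mul_one]
    congr
    exact Real.sq_sqrt v.2
  have hpre : (√(v : ℝ) * ·) ⁻¹' Icc (-t) t = Icc (-(t / √v)) (t / √v) := by
    ext x
    simp only [mem_preimage, mem_Icc, ← neg_div, div_le_iff₀' hσ, le_div_iff₀' hσ]
  rw [← hmap, map_measureReal_apply (measurable_const_mul _) measurableSet_Icc, hpre,
    gaussianReal_zero_one_real_Icc_neg (by positivity), chiSqOneCDF,
    Real.sqrt_div' _ (by positivity), Real.sqrt_sq ht]

lemma tvDist_gaussianReal_gaussianReal_one {v : ℝ≥0} (hv : 1 < v) :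
    tvDist (gaussianReal 0 v) (gaussianReal 0 1)
      = chiSqOneCDF (v * log v / (v - 1)) - chiSqOneCDF (log v / (v - 1)) := by
  have hv' : (1 : ℝ) < v := hv
  have hv0 : v ≠ 0 := (zero_lt_one.trans hv).ne'
  set c : ℝ := v * log v / (v - 1)
  have hc : 0 ≤ c := div_nonneg (by have := log_pos hv'; positivity) (by linarith)
  have hmem (x : ℝ) :
      x ∈ Icc (-√c) √c ↔ gaussianPDFReal 0 v x ≤ gaussianPDFReal 0 1 x := by
    rw [gaussianPDFReal_le_gaussianPDFReal_one_iff hv, Real.sq_le hc, mem_Icc]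
  rw [tvDist_eq_of_restrict_le measurableSet_Icc
      (gaussianReal_restrict_le_of_pdf_le hv0 one_ne_zero measurableSet_Icc
        fun x hx ↦ (hmem x).1 hx)
      (gaussianReal_restrict_le_of_pdf_le one_ne_zero hv0 measurableSet_Icc.compl
        fun x hx ↦ (not_le.1 (mt (hmem x).2 hx)).le),
    gaussianReal_real_Icc_neg one_ne_zero (sqrt_nonneg c),
    gaussianReal_real_Icc_neg hv0 (sqrt_nonneg c), sq_sqrt hc, NNReal.coe_one, div_one]
  congr 2
  simp only [c]
  field_simp

theorem stmt8 (s : ℝ) (hs : 1 < s) :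
    tvDist (gaussianReal 0 (Real.toNNReal (s ^ 2))) (gaussianReal 0 1)
      = chiSqOneCDF (s ^ 2 * Real.log (s ^ 2) / (s ^ 2 - 1))
        - chiSqOneCDF (Real.log (s ^ 2) / (s ^ 2 - 1)) := by
  have hv : 1 < Real.toNNReal (s ^ 2) := by
    rw [Real.one_lt_toNNReal]
    nlinarith
  rw [tvDist_gaussianReal_gaussianReal_one hv, Real.coe_toNNReal _ (sq_nonneg s)]
end

section
/- For any real a and any s > 0, the total variation distance between N(a, s²) and N(0, 1) is at most |a|/√(2π) + |log(s²)|/√(2πe). -/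
open MeasureTheory ProbabilityTheory Real Set

/-!
Pass through `N(a, 1)` by the triangle inequality. For two Gaussian laws with densities `f`, `g`,
Scheffé's argument bounds `|P A - Q A|` by `P S - Q S`, where `S` is a set on which `g ≤ f` and
off which `f ≤ g`: the half-line `[a/2, ∞)` when only the mean changes, a ball around the mean
when only the variance changes. After standardizing, the first bound is the standard normal mass
of an interval of length `|a|`, at most `|a| φ(0)`; the second is the mass of a shell
`c < |x| ≤ d` with `log d - log c = |log s|`, at most `2 |log s| / √(2πe)` because
`x φ(x) ≤ φ(1)` and `∫ dx / x = log`.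
-/

open scoped NNReal

section Scheffe

variable {α : Type*} [MeasurableSpace α] {μ : Measure α} {h : α → ℝ} {S : Set α}

lemma setIntegral_le_setIntegral_of_nonneg_on_of_nonpos_off (hh : Integrable h μ)
    (hS : MeasurableSet S) (hpos : ∀ x ∈ S, 0 ≤ h x) (hneg : ∀ x ∉ S, h x ≤ 0) (B : Set α) :
    ∫ x in B, h x ∂μ ≤ ∫ x in S, h x ∂μ := by
  have hle : h ≤ S.indicator h := fun x ↦ by by_cases hx : x ∈ S <;> simp [hx, hneg]
  calc ∫ x in B, h x ∂μ ≤ ∫ x in B, S.indicator h x ∂μ :=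
        setIntegral_mono hh.integrableOn (hh.indicator hS).integrableOn hle
    _ ≤ ∫ x, S.indicator h x ∂μ :=
        setIntegral_le_integral (hh.indicator hS) (ae_of_all _ (indicator_nonneg hpos))
    _ = ∫ x in S, h x ∂μ := integral_indicator hS

lemma abs_setIntegral_le_of_integral_eq_zero (hh : Integrable h μ) (h0 : ∫ x, h x ∂μ = 0)
    (hS : MeasurableSet S) (hpos : ∀ x ∈ S, 0 ≤ h x) (hneg : ∀ x ∉ S, h x ≤ 0)
    {A : Set α} (hA : MeasurableSet A) :
    |∫ x in A, h x ∂μ| ≤ ∫ x in S, h x ∂μ := by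
  have hsplit := integral_add_compl hA hh
  have hA' := setIntegral_le_setIntegral_of_nonneg_on_of_nonpos_off hh hS hpos hneg A
  have hAc := setIntegral_le_setIntegral_of_nonneg_on_of_nonpos_off hh hS hpos hneg Aᶜ
  rw [abs_le]
  constructor <;> linarith

end Scheffe

lemma gaussianReal_real_eq_setIntegral (m : ℝ) {v : ℝ≥0} (hv : v ≠ 0) (A : Set ℝ) :
    (gaussianReal m v).real A = ∫ x in A, gaussianPDFReal m v x := by
  rw [measureReal_def, gaussianReal_apply_eq_integral _ hv, ENNReal.toReal_ofReal]
  exact integral_nonneg fun x ↦ gaussianPDFReal_nonneg _ _ _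

lemma abs_gaussianReal_real_sub_le_of_pdf_le {m₁ m₂ : ℝ} {v₁ v₂ : ℝ≥0} (hv₁ : v₁ ≠ 0)
    (hv₂ : v₂ ≠ 0) {S : Set ℝ} (hS : MeasurableSet S)
    (hin : ∀ x ∈ S, gaussianPDFReal m₂ v₂ x ≤ gaussianPDFReal m₁ v₁ x)
    (hout : ∀ x ∉ S, gaussianPDFReal m₁ v₁ x ≤ gaussianPDFReal m₂ v₂ x)
    {A : Set ℝ} (hA : MeasurableSet A) :
    |(gaussianReal m₁ v₁).real A - (gaussianReal m₂ v₂).real A|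
      ≤ (gaussianReal m₁ v₁).real S - (gaussianReal m₂ v₂).real S := by
  have hi₁ := integrable_gaussianPDFReal m₁ v₁
  have hi₂ := integrable_gaussianPDFReal m₂ v₂
  simp only [gaussianReal_real_eq_setIntegral _ hv₁, gaussianReal_real_eq_setIntegral _ hv₂,
    ← integral_sub hi₁.integrableOn hi₂.integrableOn]
  refine abs_setIntegral_le_of_integral_eq_zero (hi₁.sub hi₂) ?_ hS
    (fun x hx ↦ sub_nonneg.2 (hin x hx)) (fun x hx ↦ sub_nonpos.2 (hout x hx)) hA
  simp only [Pi.sub_apply]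
  rw [integral_sub hi₁ hi₂, integral_gaussianPDFReal_eq_one _ hv₁,
    integral_gaussianPDFReal_eq_one _ hv₂, sub_self]

lemma gaussianPDFReal_le_gaussianPDFReal_iff {m₁ m₂ : ℝ} {v₁ v₂ : ℝ≥0} (hv₁ : v₁ ≠ 0)
    (hv₂ : v₂ ≠ 0) (x : ℝ) :
    gaussianPDFReal m₁ v₁ x ≤ gaussianPDFReal m₂ v₂ x ↔
      log v₂ + (x - m₂) ^ 2 / v₂ ≤ log v₁ + (x - m₁) ^ 2 / v₁ := by
  have hexp : ∀ (m : ℝ) (v : ℝ≥0), v ≠ 0 → gaussianPDFReal m v x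
      = exp (-(log (2 * π) + (log v + (x - m) ^ 2 / v)) / 2) := by
    intro m v hv
    have hv0 : (0 : ℝ) < v := by positivity
    rw [gaussianPDFReal, sqrt_eq_rpow, ← rpow_neg (by positivity), rpow_def_of_pos (by positivity),
      ← exp_add, log_mul (by positivity) hv0.ne']
    congr 1
    field_simp
    ring
  rw [hexp _ _ hv₁, hexp _ _ hv₂, exp_le_exp]
  constructor <;> intro h <;> linarith

lemma gaussianPDFReal_le_gaussianPDFReal_iff_sq_le (m₁ m₂ : ℝ) {v : ℝ≥0} (hv : v ≠ 0) (x : ℝ) :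
    gaussianPDFReal m₁ v x ≤ gaussianPDFReal m₂ v x ↔ (x - m₂) ^ 2 ≤ (x - m₁) ^ 2 := by
  rw [gaussianPDFReal_le_gaussianPDFReal_iff hv hv, add_le_add_iff_left,
    div_le_div_iff_of_pos_right (by positivity)]

lemma gaussianReal_eq_map_gaussianReal_zero_one (m : ℝ) (v : ℝ≥0) :
    gaussianReal m v = (gaussianReal 0 1).map (fun x ↦ √v * x + m) := by
  have hv : (.mk (√v ^ 2) (sq_nonneg _) : ℝ≥0) * 1 = v := by ext; simp
  change _ = (gaussianReal 0 1).map ((· + m) ∘ (√v * ·))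
  rw [← Measure.map_map (measurable_add_const m) (measurable_const_mul _),
    gaussianReal_map_const_mul, hv, gaussianReal_map_add_const, mul_zero, zero_add]

lemma gaussianReal_real_Ici (m : ℝ) {v : ℝ≥0} (hv : v ≠ 0) (c : ℝ) :
    (gaussianReal m v).real (Ici c) = (gaussianReal 0 1).real (Ici ((c - m) / √v)) := by
  have hsv : 0 < √(v : ℝ) := by positivity
  rw [gaussianReal_eq_map_gaussianReal_zero_one m v,
    map_measureReal_apply (by fun_prop) measurableSet_Ici]
  congr 1
  ext x
  simp only [mem_preimage, mem_Ici, div_le_iff₀ hsv]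
  constructor <;> intro <;> linarith

lemma gaussianReal_real_closedBall (m : ℝ) {v : ℝ≥0} (hv : v ≠ 0) (r : ℝ) :
    (gaussianReal m v).real (Metric.closedBall m r)
      = (gaussianReal 0 1).real (Metric.closedBall 0 (r / √v)) := by
  have hsv : 0 < √(v : ℝ) := by positivity
  rw [gaussianReal_eq_map_gaussianReal_zero_one m v,
    map_measureReal_apply (by fun_prop) Metric.isClosed_closedBall.measurableSet]
  congr 1
  ext x
  simp only [mem_preimage, Metric.mem_closedBall, dist_zero_right, Real.dist_eq,
    add_sub_cancel_right, norm_eq_abs, abs_mul, abs_of_pos hsv, le_div_iff₀ hsv, mul_comm]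

lemma gaussianReal_real_neg_preimage (v : ℝ≥0) {B : Set ℝ} (hB : MeasurableSet B) :
    (gaussianReal 0 v).real ((fun x ↦ -x) ⁻¹' B) = (gaussianReal 0 v).real B := by
  rw [← map_measureReal_apply measurable_neg hB, gaussianReal_map_neg, neg_zero]

lemma gaussianPDFReal_zero_one_le (x : ℝ) : gaussianPDFReal 0 1 x ≤ (√(2 * π))⁻¹ := by
  simp only [gaussianPDFReal, NNReal.coe_one, mul_one]
  exact mul_le_of_le_one_right (by positivity) (exp_le_one_iff.2 (by nlinarith))

-- `x ≤ (x² + 1) / 2 ≤ exp ((x² - 1) / 2)`, i.e. `x e^{-x²/2}` is maximal at `x = 1`.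
lemma mul_gaussianPDFReal_zero_one_le (x : ℝ) :
    x * gaussianPDFReal 0 1 x ≤ (√(2 * π * exp 1))⁻¹ := by
  have hx : x ≤ exp ((x ^ 2 - 1) / 2) := by
    nlinarith [add_one_le_exp ((x ^ 2 - 1) / 2), sq_nonneg (x - 1)]
  have hsplit : (√(2 * π * exp 1))⁻¹ = (√(2 * π))⁻¹ * exp (-1 / 2) := by
    rw [sqrt_mul (by positivity), sqrt_eq_rpow (exp 1), ← exp_one_rpow, ← rpow_mul (exp_pos 1).le,
      exp_one_rpow, mul_inv, ← exp_neg]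
    norm_num
  simp only [gaussianPDFReal, NNReal.coe_one, mul_one, sub_zero]
  rw [hsplit, mul_left_comm]
  gcongr
  calc x * exp (-x ^ 2 / 2) ≤ exp ((x ^ 2 - 1) / 2) * exp (-x ^ 2 / 2) := by gcongr
    _ = exp (-1 / 2) := by rw [← exp_add]; ring_nf

lemma gaussianReal_real_le_volume_real {B : Set ℝ} (hB : volume B ≠ ⊤) :
    (gaussianReal 0 1).real B ≤ volume.real B / √(2 * π) := by
  rw [gaussianReal_real_eq_setIntegral 0 one_ne_zero, div_eq_mul_inv, ← smul_eq_mul,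
    ← setIntegral_const]
  exact setIntegral_mono (integrable_gaussianPDFReal 0 1).integrableOn
    (integrableOn_const hB) gaussianPDFReal_zero_one_le

lemma abs_gaussianReal_real_Ici_sub_le (c d : ℝ) :
    |(gaussianReal 0 1).real (Ici c) - (gaussianReal 0 1).real (Ici d)| ≤ |c - d| / √(2 * π) := by
  wlog hcd : c ≤ d generalizing c d
  · rw [abs_sub_comm, abs_sub_comm c]
    exact this d c (le_of_not_ge hcd)
  rw [← measureReal_sdiff (Ici_subset_Ici.2 hcd) measurableSet_Ici, Ici_sdiff_Ici,
    abs_of_nonneg measureReal_nonneg, abs_of_nonpos (by linarith), neg_sub,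
    ← Real.volume_real_Ico_of_le hcd]
  exact gaussianReal_real_le_volume_real measure_Ico_lt_top.ne

lemma gaussianReal_real_Ioc_le_log {c d : ℝ} (hc : 0 < c) (hcd : c ≤ d) :
    (gaussianReal 0 1).real (Ioc c d) ≤ (log d - log c) / √(2 * π * exp 1) := by
  have hpdf : ∀ x ∈ Ioc c d, gaussianPDFReal 0 1 x ≤ (√(2 * π * exp 1))⁻¹ * x⁻¹ := by
    intro x hx
    rw [← div_eq_mul_inv, le_div_iff₀ (hc.trans hx.1), mul_comm]
    exact mul_gaussianPDFReal_zero_one_le x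
  have hinv : IntegrableOn (fun x ↦ (√(2 * π * exp 1))⁻¹ * x⁻¹) (Ioc c d) :=
    ((continuousOn_const.mul (continuousOn_inv₀.mono fun x hx ↦
      (hc.trans_le hx.1).ne')).integrableOn_Icc).mono_set Ioc_subset_Icc_self
  calc (gaussianReal 0 1).real (Ioc c d) = ∫ x in Ioc c d, gaussianPDFReal 0 1 x :=
        gaussianReal_real_eq_setIntegral 0 one_ne_zero _
    _ ≤ ∫ x in Ioc c d, (√(2 * π * exp 1))⁻¹ * x⁻¹ :=
        setIntegral_mono_on (integrable_gaussianPDFReal 0 1).integrableOn hinv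
          measurableSet_Ioc hpdf
    _ = (log d - log c) / √(2 * π * exp 1) := by
        rw [integral_const_mul, ← intervalIntegral.integral_of_le hcd,
          integral_inv_of_pos hc (hc.trans_le hcd), log_div (by linarith) hc.ne']
        ring

lemma abs_gaussianReal_real_closedBall_sub_le {c d : ℝ} (hc : 0 < c) (hd : 0 < d) :
    |(gaussianReal 0 1).real (Metric.closedBall 0 c)
        - (gaussianReal 0 1).real (Metric.closedBall 0 d)|
      ≤ 2 * |log c - log d| / √(2 * π * exp 1) := by
  wlog hcd : c ≤ d generalizing c d
  · rw [abs_sub_comm, abs_sub_comm (log c)]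
    exact this hd hc (le_of_not_ge hcd)
  have hshell : Metric.closedBall (0 : ℝ) d \ Metric.closedBall 0 c
      ⊆ Ioc c d ∪ (fun x ↦ -x) ⁻¹' Ioc c d := by
    intro x
    simp only [mem_sdiff, Metric.mem_closedBall, dist_zero_right, norm_eq_abs, mem_union,
      mem_preimage, mem_Ioc]
    rcases le_total 0 x with hx | hx
    · rw [abs_of_nonneg hx]; grind
    · rw [abs_of_nonpos hx]; grind
  have hlog : log c ≤ log d := log_le_log hc hcd
  have hmono : (gaussianReal 0 1).real (Metric.closedBall 0 c)
      ≤ (gaussianReal 0 1).real (Metric.closedBall 0 d) :=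
    measureReal_mono (Metric.closedBall_subset_closedBall hcd)
  rw [abs_of_nonpos (by linarith), abs_of_nonpos (by linarith), neg_sub, neg_sub,
    ← measureReal_sdiff (Metric.closedBall_subset_closedBall hcd)
      Metric.isClosed_closedBall.measurableSet]
  calc _ ≤ (gaussianReal 0 1).real (Ioc c d ∪ (fun x ↦ -x) ⁻¹' Ioc c d) :=
        measureReal_mono hshell
    _ ≤ (gaussianReal 0 1).real (Ioc c d)
          + (gaussianReal 0 1).real ((fun x ↦ -x) ⁻¹' Ioc c d) := measureReal_union_le _ _
    _ ≤ 2 * (log d - log c) / √(2 * π * exp 1) := by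
        rw [gaussianReal_real_neg_preimage 1 measurableSet_Ioc, mul_div_assoc]
        linarith [gaussianReal_real_Ioc_le_log hc hcd]

lemma abs_gaussianReal_real_sub_le_mean (a : ℝ) {A : Set ℝ} (hA : MeasurableSet A) :
    |(gaussianReal a 1).real A - (gaussianReal 0 1).real A| ≤ |a| / √(2 * π) := by
  have hcmp := gaussianPDFReal_le_gaussianPDFReal_iff_sq_le (v := 1) (hv := one_ne_zero)
  have key : |(gaussianReal a 1).real A - (gaussianReal 0 1).real A|
      ≤ |(gaussianReal a 1).real (Ici (a / 2)) - (gaussianReal 0 1).real (Ici (a / 2))| := by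
    rcases le_total 0 a with ha | ha
    · refine (abs_gaussianReal_real_sub_le_of_pdf_le one_ne_zero one_ne_zero measurableSet_Ici
        (fun x hx ↦ ?_) (fun x hx ↦ ?_) hA).trans (le_abs_self _)
      · rw [hcmp]; nlinarith [mem_Ici.1 hx]
      · rw [hcmp]; nlinarith [notMem_Ici.1 hx]
    · rw [abs_sub_comm, abs_sub_comm ((gaussianReal a 1).real _)]
      refine (abs_gaussianReal_real_sub_le_of_pdf_le one_ne_zero one_ne_zero measurableSet_Ici
        (fun x hx ↦ ?_) (fun x hx ↦ ?_) hA).trans (le_abs_self _)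
      · rw [hcmp]; nlinarith [mem_Ici.1 hx]
      · rw [hcmp]; nlinarith [notMem_Ici.1 hx]
  rw [gaussianReal_real_Ici a one_ne_zero] at key
  refine key.trans ((abs_gaussianReal_real_Ici_sub_le _ _).trans_eq ?_)
  rw [NNReal.coe_one, sqrt_one, div_one, ← abs_neg]
  ring_nf

-- `t` is the distance from `a` at which the densities of `N(a, v)` and `N(a, 1)` cross.
lemma abs_gaussianReal_real_sub_le_abs_sub_closedBall (a : ℝ) {v : ℝ≥0} (hv : v ≠ 0)
    (hv1 : (v : ℝ) ≠ 1) {t : ℝ} (ht0 : 0 < t) (ht : t ^ 2 * (v - 1) = v * log v)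
    {A : Set ℝ} (hA : MeasurableSet A) :
    |(gaussianReal a v).real A - (gaussianReal a 1).real A|
      ≤ |(gaussianReal a v).real (Metric.closedBall a t)
          - (gaussianReal a 1).real (Metric.closedBall a t)| := by
  have hv0 : (0 : ℝ) < v := by positivity
  have hdiff : ∀ x, (x - a) ^ 2 - (log v + (x - a) ^ 2 / v)
      = ((x - a) ^ 2 - t ^ 2) * (v - 1) / v :=
    fun x ↦ by rw [sub_mul, ht]; field_simp; ring
  have hcmp : ∀ x, gaussianPDFReal a 1 x ≤ gaussianPDFReal a v x ↔
      0 ≤ ((x - a) ^ 2 - t ^ 2) * (v - 1) := fun x ↦ by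
    rw [gaussianPDFReal_le_gaussianPDFReal_iff one_ne_zero hv, NNReal.coe_one, log_one, zero_add,
      div_one, ← sub_nonneg, hdiff, le_div_iff₀ hv0, zero_mul]
  have hcmp' : ∀ x, gaussianPDFReal a v x ≤ gaussianPDFReal a 1 x ↔
      ((x - a) ^ 2 - t ^ 2) * (v - 1) ≤ 0 := fun x ↦ by
    rw [gaussianPDFReal_le_gaussianPDFReal_iff hv one_ne_zero, NNReal.coe_one, log_one, zero_add,
      div_one, ← sub_nonpos, hdiff, div_le_iff₀ hv0, zero_mul]
  have hball : ∀ x, x ∈ Metric.closedBall a t ↔ (x - a) ^ 2 ≤ t ^ 2 := fun x ↦ by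
    rw [Metric.mem_closedBall, dist_eq, sq_le_sq, abs_of_pos ht0]
  have hS : MeasurableSet (Metric.closedBall a t) := Metric.isClosed_closedBall.measurableSet
  rcases lt_or_gt_of_ne hv1 with h | h
  · refine (abs_gaussianReal_real_sub_le_of_pdf_le hv one_ne_zero hS (fun x hx ↦ ?_)
      (fun x hx ↦ ?_) hA).trans (le_abs_self _)
    · rw [hcmp]; nlinarith [(hball x).1 hx]
    · rw [hcmp']; nlinarith [mt (hball x).2 hx]
  · rw [abs_sub_comm, abs_sub_comm ((gaussianReal a v).real _)]
    refine (abs_gaussianReal_real_sub_le_of_pdf_le one_ne_zero hv hS (fun x hx ↦ ?_)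
      (fun x hx ↦ ?_) hA).trans (le_abs_self _)
    · rw [hcmp']; nlinarith [(hball x).1 hx]
    · rw [hcmp]; nlinarith [mt (hball x).2 hx]

lemma abs_gaussianReal_real_sub_le_log_var (a : ℝ) {v : ℝ≥0} (hv : v ≠ 0)
    {A : Set ℝ} (hA : MeasurableSet A) :
    |(gaussianReal a v).real A - (gaussianReal a 1).real A| ≤ |log v| / √(2 * π * exp 1) := by
  rcases eq_or_ne v 1 with rfl | hv1
  · simp
  have hv0 : (0 : ℝ) < v := by positivity
  have hv1' : (v : ℝ) ≠ 1 := by exact_mod_cast hv1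
  have hrad : 0 < v * log v / (v - 1) := by
    rcases lt_or_gt_of_ne hv1' with h | h
    · exact div_pos_of_neg_of_neg (mul_neg_of_pos_of_neg hv0 (log_neg hv0 h)) (by linarith)
    · exact div_pos (mul_pos hv0 (log_pos h)) (by linarith)
  set t := √(v * log v / (v - 1))
  have ht0 : 0 < t := sqrt_pos.2 hrad
  have ht : t ^ 2 * (v - 1) = v * log v := by
    rw [sq_sqrt hrad.le, div_mul_cancel₀ _ (sub_ne_zero.2 hv1')]
  have key := abs_gaussianReal_real_sub_le_abs_sub_closedBall a hv hv1' ht0 ht hA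
  rw [gaussianReal_real_closedBall a hv, gaussianReal_real_closedBall a one_ne_zero,
    NNReal.coe_one, sqrt_one, div_one] at key
  refine key.trans ((abs_gaussianReal_real_closedBall_sub_le
    (div_pos ht0 (sqrt_pos.2 hv0)) ht0).trans_eq ?_)
  rw [log_div ht0.ne' (sqrt_pos.2 hv0).ne', log_sqrt hv0.le, sub_sub_cancel_left, abs_neg,
    abs_div, abs_two]
  ring

theorem stmt9 (a s : ℝ) (hs : 0 < s) :
    tvDist (gaussianReal a (Real.toNNReal (s ^ 2))) (gaussianReal 0 1)
      ≤ |a| / Real.sqrt (2 * Real.pi)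
        + |Real.log (s ^ 2)| / Real.sqrt (2 * Real.pi * Real.exp 1) := by
  have hv : Real.toNNReal (s ^ 2) ≠ 0 := by positivity
  refine Real.sSup_le ?_ (by positivity)
  rintro _ ⟨A, hA, rfl⟩
  have hvar := abs_gaussianReal_real_sub_le_log_var a hv hA
  have hmean := abs_gaussianReal_real_sub_le_mean a hA
  rw [Real.coe_toNNReal _ (sq_nonneg s)] at hvar
  calc _ ≤ |(gaussianReal a (s ^ 2).toNNReal).real A - (gaussianReal a 1).real A|
        + |(gaussianReal a 1).real A - (gaussianReal 0 1).real A| := abs_sub_le _ _ _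
    _ ≤ _ := by linarith
end

section
/- Let η ∈ ℝ^d with η₁ = 1, let Γ be d×d symmetric positive semidefinite with zero first row and column and positive definite lower-right (d-1)×(d-1) block, and let Δ = Γ + ηη'. Then the matrix K = Δ^{-1/2} Γ Δ^{-1/2} satisfies K = I_d - ww' where w = Δ^{-1/2}η is a unit vector; in particular K has eigenvalue 0 with eigenvector w and eigenvalue 1 with multiplicity d - 1 on the orthogonal complement of w. -/
open Matrix

namespace Matrix.PosSemidef

open scoped ComplexOrder

/-- The positive semidefinite square root of a positive semidefinite matrix
(the definition removed from Mathlib, restored with its old meaning). -/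
noncomputable def sqrt {n 𝕜 : Type*} [Fintype n] [DecidableEq n] [RCLike 𝕜]
    {A : Matrix n n 𝕜} (hA : A.PosSemidef) : Matrix n n 𝕜 :=
  hA.1.eigenvectorUnitary.1 * diagonal ((↑) ∘ Real.sqrt ∘ hA.1.eigenvalues) *
    (star hA.1.eigenvectorUnitary : Matrix n n 𝕜)

end Matrix.PosSemidef

/-!
Write `S = Δ^{1/2}`, a symmetric matrix with `S * S = Δ = Γ + ηηᵀ`. Then
`S⁻¹ Γ S⁻¹ = S⁻¹ (S S - ηηᵀ) S⁻¹ = 1 - wwᵀ`. Since the first column of `Γ` vanishes and `η₀ = 1`,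
`Δ e₀ = η`, so `w = S⁻¹ Δ e₀ = S e₀` and `w ⬝ w = e₀ ⬝ S S e₀ = η₀ = 1`. Invertibility of `S`
comes from `Δ` being positive definite: `xᵀ Δ x = xᵀ Γ x + (η ⬝ x)²`, where the first term only sees
the tail of `x` and the second is `x₀²` when that tail vanishes.
-/

namespace Matrix.PosSemidef

open scoped ComplexOrder

variable {n 𝕜 : Type*} [Fintype n] [DecidableEq n] [RCLike 𝕜] {A : Matrix n n 𝕜}

lemma sqrt_eq_cfc (hA : A.PosSemidef) : hA.sqrt = cfc Real.sqrt A := by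
  rw [hA.1.cfc_eq, IsHermitian.cfc, Unitary.conjStarAlgAut_apply]
  rfl

lemma isHermitian_sqrt (hA : A.PosSemidef) : hA.sqrt.IsHermitian := by
  rw [sqrt_eq_cfc]
  exact cfc_predicate _ _

lemma sqrt_mul_self (hA : A.PosSemidef) : hA.sqrt * hA.sqrt = A := by
  have hspec : ∀ x ∈ spectrum ℝ A, 0 ≤ x := by
    rw [hA.1.spectrum_real_eq_range_eigenvalues]
    rintro - ⟨i, rfl⟩
    exact hA.eigenvalues_nonneg i
  rw [sqrt_eq_cfc, ← cfc_mul Real.sqrt Real.sqrt A]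
  exact (cfc_congr fun x hx => Real.mul_self_sqrt (hspec x hx)).trans (cfc_id' ℝ A hA.1)

end Matrix.PosSemidef

namespace Matrix

section CommRing

variable {m R : Type*} [Fintype m] [DecidableEq m] [CommRing R]

lemma one_sub_vecMulVec_mulVec (w v : m → R) :
    (1 - vecMulVec w w) *ᵥ v = v - (w ⬝ᵥ v) • w := by
  rw [sub_mulVec, one_mulVec, vecMulVec_mulVec, op_smul_eq_smul]

variable {S Γ : Matrix m m R} {η : m → R}

lemma inv_mul_mul_inv_eq_one_sub_vecMulVec (hS : IsUnit S.det) (hSsymm : S.IsSymm)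
    (hSS : S * S = Γ + vecMulVec η η) :
    S⁻¹ * Γ * S⁻¹ = 1 - vecMulVec (S⁻¹ *ᵥ η) (S⁻¹ *ᵥ η) := by
  rw [eq_sub_of_add_eq hSS.symm, mul_sub, sub_mul, mul_vecMulVec, vecMulVec_mul,
    ← mulVec_transpose, hSsymm.inv.eq, ← mul_assoc, nonsing_inv_mul _ hS, one_mul,
    mul_nonsing_inv _ hS]

lemma inv_mulVec_dotProduct_self (hS : IsUnit S.det) (hSsymm : S.IsSymm) {e : m → R}
    (he : (S * S) *ᵥ e = η) :
    (S⁻¹ *ᵥ η) ⬝ᵥ (S⁻¹ *ᵥ η) = η ⬝ᵥ e := by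
  have hw : S⁻¹ *ᵥ η = S *ᵥ e := by
    rw [← he, mulVec_mulVec, ← mul_assoc, nonsing_inv_mul _ hS, one_mul]
  rw [hw, dotProduct_mulVec, ← mulVec_transpose, hSsymm.eq, mulVec_mulVec, he]

end CommRing

variable {n : ℕ}

lemma dotProduct_mulVec_eq_submatrix_succ {R : Type*} [CommSemiring R]
    {Γ : Matrix (Fin (n + 1)) (Fin (n + 1)) R}
    (hrow : ∀ j, Γ 0 j = 0) (hcol : ∀ i, Γ i 0 = 0) (x : Fin (n + 1) → R) :
    x ⬝ᵥ Γ *ᵥ x = Fin.tail x ⬝ᵥ Γ.submatrix Fin.succ Fin.succ *ᵥ Fin.tail x := by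
  simp only [dotProduct, mulVec, Fin.sum_univ_succ, hrow, hcol, zero_mul, mul_zero,
    Finset.sum_const_zero, zero_add, submatrix_apply, Fin.tail]

lemma posDef_add_vecMulVec_of_submatrix_succ {Γ : Matrix (Fin (n + 1)) (Fin (n + 1)) ℝ}
    {η : Fin (n + 1) → ℝ} (hη : η 0 ≠ 0) (hrow : ∀ j, Γ 0 j = 0) (hcol : ∀ i, Γ i 0 = 0)
    (hblock : (Γ.submatrix Fin.succ Fin.succ).PosDef)
    (hΔ : (Γ + vecMulVec η η).IsHermitian) : (Γ + vecMulVec η η).PosDef := by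
  refine posDef_iff_dotProduct_mulVec.mpr ⟨hΔ, fun x hx => ?_⟩
  have hblock' := posDef_iff_dotProduct_mulVec.mp hblock
  simp only [star_trivial, add_mulVec, dotProduct_add, vecMulVec_mulVec, op_smul_eq_smul,
    dotProduct_smul, smul_eq_mul, dotProduct_mulVec_eq_submatrix_succ hrow hcol] at hblock' ⊢
  rcases eq_or_ne (Fin.tail x) 0 with htail | htail
  · have hx0 : x 0 ≠ 0 := fun h0 => hx (by
      ext i
      refine Fin.cases h0 (fun j => congrFun htail j) i)
    have hηx : η ⬝ᵥ x = η 0 * x 0 := by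
      have hsucc (j : Fin n) : x j.succ = 0 := congrFun htail j
      simp [dotProduct, Fin.sum_univ_succ, hsucc]
    rw [htail, zero_dotProduct, zero_add, dotProduct_comm x η, hηx]
    exact mul_self_pos.mpr (mul_ne_zero hη hx0)
  · rw [dotProduct_comm x η]
    exact add_pos_of_pos_of_nonneg (hblock'.2 htail) (mul_self_nonneg _)

end Matrix

theorem stmt13_general {n : ℕ} (η : Fin (n + 1) → ℝ) (hη : η 0 = 1)
    (Γ : Matrix (Fin (n + 1)) (Fin (n + 1)) ℝ)
    (hrow : ∀ j, Γ 0 j = 0) (hcol : ∀ i, Γ i 0 = 0)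
    (hblock : (Γ.submatrix Fin.succ Fin.succ).PosDef)
    (hΔ : (Γ + vecMulVec η η).PosSemidef) :
    let K := (hΔ.sqrt)⁻¹ * Γ * (hΔ.sqrt)⁻¹
    let w := (hΔ.sqrt)⁻¹ *ᵥ η
    K = 1 - vecMulVec w w ∧ w ⬝ᵥ w = 1 ∧ K *ᵥ w = 0 ∧
      ∀ v : Fin (n + 1) → ℝ, v ⬝ᵥ w = 0 → K *ᵥ v = v := by
  intro K w
  have hSS := hΔ.sqrt_mul_self
  have hSsymm : hΔ.sqrt.IsSymm := isHermitian_iff_isSymm.mp hΔ.isHermitian_sqrt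
  have hS : IsUnit hΔ.sqrt.det := by
    refine isUnit_of_mul_isUnit_left (y := hΔ.sqrt.det) ?_
    rw [← det_mul, hSS, ← isUnit_iff_isUnit_det]
    exact (posDef_add_vecMulVec_of_submatrix_succ (hη ▸ one_ne_zero) hrow hcol hblock hΔ.1).isUnit
  have he : (hΔ.sqrt * hΔ.sqrt) *ᵥ Pi.single 0 1 = η := by
    ext i
    simp [hSS, vecMulVec_apply, hcol, hη]
  have hK : K = 1 - vecMulVec w w := inv_mul_mul_inv_eq_one_sub_vecMulVec hS hSsymm hSS
  have hww : w ⬝ᵥ w = 1 := by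
    rw [inv_mulVec_dotProduct_self hS hSsymm he]
    simp [hη]
  refine ⟨hK, hww, ?_, fun v hv => ?_⟩
  · rw [hK, one_sub_vecMulVec_mulVec, hww, one_smul, sub_self]
  · rw [hK, one_sub_vecMulVec_mulVec, dotProduct_comm, hv, zero_smul, sub_zero]

theorem stmt13 {n : ℕ} (η : Fin (n + 1) → ℝ) (hη : η 0 = 1)
    (Γ : Matrix (Fin (n + 1)) (Fin (n + 1)) ℝ) (hΓ : Γ.PosSemidef)
    (hrow : ∀ j, Γ 0 j = 0) (hcol : ∀ i, Γ i 0 = 0)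
    (hblock : (Γ.submatrix Fin.succ Fin.succ).PosDef)
    (hΔ : (Γ + vecMulVec η η).PosSemidef) :
    let K := (hΔ.sqrt)⁻¹ * Γ * (hΔ.sqrt)⁻¹
    let w := (hΔ.sqrt)⁻¹ *ᵥ η
    K = 1 - vecMulVec w w ∧ w ⬝ᵥ w = 1 ∧ K *ᵥ w = 0 ∧
      ∀ v : Fin (n + 1) → ℝ, v ⬝ᵥ w = 0 → K *ᵥ v = v :=
  stmt13_general η hη Γ hrow hcol hblock hΔ
end
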